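/- Local deduction theorem for Łukasiewicz logic: for formulas φ, ψ, φ ⊢_Ł ψ if and only if there exists a positive integer n such that ⊢_Ł φⁿ → ψ, where φⁿ is the n-fold ⊙-power of φ. -/
import Mathlib


/-- Formulas of Łukasiewicz propositional logic. -/
inductive Fm : Type
  | var : ℕ → Fm
  | bot : Fm
  | oplus : Fm → Fm → Fm
  | neg : Fm → Fm

/-- φ → ψ := ¬φ ⊕ ψ. -/
def Fm.imp (φ ψ : Fm) : Fm := Fm.oplus (Fm.neg φ) ψ
/-- φ ⊙ ψ := ¬(¬φ ⊕ ¬ψ). -/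
def Fm.odot (φ ψ : Fm) : Fm := Fm.neg (Fm.oplus (Fm.neg φ) (Fm.neg ψ))

/-- Derivability in Łukasiewicz logic from a set of hypotheses: axioms
(Ł1)–(Ł4) and modus ponens. -/
inductive Prov : Set Fm → Fm → Prop
  | hyp : ∀ (Γ : Set Fm) (φ : Fm), φ ∈ Γ → Prov Γ φ
  | L1 : ∀ (Γ : Set Fm) (φ ψ : Fm), Prov Γ (φ.imp (ψ.imp φ))
  | L2 : ∀ (Γ : Set Fm) (φ ψ γ : Fm),
      Prov Γ ((φ.imp ψ).imp ((ψ.imp γ).imp (φ.imp γ)))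
  | L3 : ∀ (Γ : Set Fm) (φ ψ : Fm),
      Prov Γ (((φ.imp ψ).imp ψ).imp ((ψ.imp φ).imp φ))
  | L4 : ∀ (Γ : Set Fm) (φ ψ : Fm),
      Prov Γ ((φ.neg.imp ψ.neg).imp (ψ.imp φ))
  | mp : ∀ (Γ : Set Fm) (φ ψ : Fm), Prov Γ φ → Prov Γ (φ.imp ψ) → Prov Γ ψ

/-- `opow φ n` is the (n+1)-fold ⊙-power φ ⊙ ⋯ ⊙ φ of φ. -/
def opow (φ : Fm) : ℕ → Fm
  | 0 => φ
  | n + 1 => φ.odot (opow φ n)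

theorem prov_id (Γ : Set Fm) (A : Fm) : Prov Γ (Fm.imp A A) :=
  (Prov.mp _ (Fm.imp (Fm.imp (Fm.imp Fm.bot (Fm.imp Fm.bot Fm.bot)) A) A) (Fm.imp A A) (Prov.mp _ (Fm.imp (Fm.imp A (Fm.imp Fm.bot (Fm.imp Fm.bot Fm.bot))) (Fm.imp Fm.bot (Fm.imp Fm.bot Fm.bot))) (Fm.imp (Fm.imp (Fm.imp Fm.bot (Fm.imp Fm.bot Fm.bot)) A) A) (Prov.mp _ (Fm.imp Fm.bot (Fm.imp Fm.bot Fm.bot)) (Fm.imp (Fm.imp A (Fm.imp Fm.bot (Fm.imp Fm.bot Fm.bot))) (Fm.imp Fm.bot (Fm.imp Fm.bot Fm.bot))) (Prov.L1 _ Fm.bot Fm.bot) (Prov.L1 _ (Fm.imp Fm.bot (Fm.imp Fm.bot Fm.bot)) (Fm.imp A (Fm.imp Fm.bot (Fm.imp Fm.bot Fm.bot))))) (Prov.L3 _ A (Fm.imp Fm.bot (Fm.imp Fm.bot Fm.bot)))) (Prov.mp _ (Fm.imp A (Fm.imp (Fm.imp Fm.bot (Fm.imp Fm.bot Fm.bot))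 A)) (Fm.imp (Fm.imp (Fm.imp (Fm.imp Fm.bot (Fm.imp Fm.bot Fm.bot)) A) A) (Fm.imp A A)) (Prov.L1 _ A (Fm.imp Fm.bot (Fm.imp Fm.bot Fm.bot))) (Prov.L2 _ A (Fm.imp (Fm.imp Fm.bot (Fm.imp Fm.bot Fm.bot)) A) A)))

theorem prov_assert (Γ : Set Fm) (A B : Fm) : Prov Γ (Fm.imp A (Fm.imp (Fm.imp A B) B)) :=
  (Prov.mp _ (Fm.imp (Fm.imp (Fm.imp B A) A) (Fm.imp (Fm.imp A B) B)) (Fm.imp A (Fm.imp (Fm.imp A B) B)) (Prov.L3 _ B A) (Prov.mp _ (Fm.imp A (Fm.imp (Fm.imp B A) A)) (Fm.imp (Fm.imp (Fm.imp (Fm.imp B A) A) (Fm.imp (Fm.imp A B) B)) (Fm.imp A (Fm.imp (Fm.imp A B) B))) (Prov.L1 _ A (Fm.imp B A)) (Prov.L2 _ A (Fm.imp (Fm.imp B A) A) (Fm.imp (Fm.imp A B) B))))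

theorem prov_dn1 (Γ : Set Fm) (A : Fm) : Prov Γ (Fm.imp A (Fm.neg (Fm.neg A))) :=
  (Prov.mp _ (Fm.imp (Fm.neg (Fm.neg (Fm.neg A))) (Fm.neg A)) (Fm.imp A (Fm.neg (Fm.neg A))) (Prov.mp _ (Fm.imp (Fm.imp (Fm.imp Fm.bot (Fm.imp Fm.bot Fm.bot)) (Fm.neg A)) (Fm.neg A)) (Fm.imp (Fm.neg (Fm.neg (Fm.neg A))) (Fm.neg A)) (Prov.mp _ (Fm.imp (Fm.imp (Fm.neg A) (Fm.imp Fm.bot (Fm.imp Fm.bot Fm.bot))) (Fm.imp Fm.bot (Fm.imp Fm.bot Fm.bot))) (Fm.imp (Fm.imp (Fm.imp Fm.bot (Fm.imp Fm.bot Fm.bot)) (Fm.neg A)) (Fm.neg A)) (Prov.mp _ (Fm.imp Fm.bot (Fm.imp Fm.bot Fm.bot)) (Fm.imp (Fm.imp (Fm.neg A) (Fm.imp Fm.bot (Fm.imp Fm.bot Fm.bot))) (Fm.imp Fm.bot (Fm.imp Fm.bot Fm.bot))) (Prov.L1 _ Fm.bot Fm.bot) (Prov.L1 _ (Fm.imp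 Fm.bot (Fm.imp Fm.bot Fm.bot)) (Fm.imp (Fm.neg A) (Fm.imp Fm.bot (Fm.imp Fm.bot Fm.bot))))) (Prov.L3 _ (Fm.neg A) (Fm.imp Fm.bot (Fm.imp Fm.bot Fm.bot)))) (Prov.mp _ (Fm.imp (Fm.neg (Fm.neg (Fm.neg A))) (Fm.imp (Fm.imp Fm.bot (Fm.imp Fm.bot Fm.bot)) (Fm.neg A))) (Fm.imp (Fm.imp (Fm.imp (Fm.imp Fm.bot (Fm.imp Fm.bot Fm.bot)) (Fm.neg A)) (Fm.neg A)) (Fm.imp (Fm.neg (Fm.neg (Fm.neg A))) (Fm.neg A))) (Prov.mp _ (Fm.imp (Fm.imp (Fm.neg (Fm.neg A)) (Fm.neg (Fm.imp Fm.bot (Fm.imp Fm.bot Fm.bot)))) (Fm.imp (Fm.imp Fm.bot (Fm.imp Fm.bot Fm.bot)) (Fm.neg A))) (Fm.imp (Fm.neg (Fm.neg (Fm.neg A))) (Fm.imp (Fm.imp Fm.bot (Fm.imp Fm.bot Fm.bot)) (Fm.neg A))) (Prov.L4 _ (Fm.neg A) (Fm.imp Fm.bot (Fm.imp Fm.bot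 Fm.bot))) (Prov.mp _ (Fm.imp (Fm.neg (Fm.neg (Fm.neg A))) (Fm.imp (Fm.neg (Fm.neg A)) (Fm.neg (Fm.imp Fm.bot (Fm.imp Fm.bot Fm.bot))))) (Fm.imp (Fm.imp (Fm.imp (Fm.neg (Fm.neg A)) (Fm.neg (Fm.imp Fm.bot (Fm.imp Fm.bot Fm.bot)))) (Fm.imp (Fm.imp Fm.bot (Fm.imp Fm.bot Fm.bot)) (Fm.neg A))) (Fm.imp (Fm.neg (Fm.neg (Fm.neg A))) (Fm.imp (Fm.imp Fm.bot (Fm.imp Fm.bot Fm.bot)) (Fm.neg A)))) (Prov.mp _ (Fm.imp (Fm.imp (Fm.neg (Fm.neg (Fm.imp Fm.bot (Fm.imp Fm.bot Fm.bot)))) (Fm.neg (Fm.neg (Fm.neg A)))) (Fm.imp (Fm.neg (Fm.neg A)) (Fm.neg (Fm.imp Fm.bot (Fm.imp Fm.bot Fm.bot))))) (Fm.imp (Fm.neg (Fm.neg (Fm.neg A))) (Fm.imp (Fm.neg (Fm.neg A)) (Fm.neg (Fm.imp Fm.bot (Fm.imp Fm.bot Fm.bot))))) (Prov.L4 _ (Fm.neg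 (Fm.imp Fm.bot (Fm.imp Fm.bot Fm.bot))) (Fm.neg (Fm.neg A))) (Prov.mp _ (Fm.imp (Fm.neg (Fm.neg (Fm.neg A))) (Fm.imp (Fm.neg (Fm.neg (Fm.imp Fm.bot (Fm.imp Fm.bot Fm.bot)))) (Fm.neg (Fm.neg (Fm.neg A))))) (Fm.imp (Fm.imp (Fm.imp (Fm.neg (Fm.neg (Fm.imp Fm.bot (Fm.imp Fm.bot Fm.bot)))) (Fm.neg (Fm.neg (Fm.neg A)))) (Fm.imp (Fm.neg (Fm.neg A)) (Fm.neg (Fm.imp Fm.bot (Fm.imp Fm.bot Fm.bot))))) (Fm.imp (Fm.neg (Fm.neg (Fm.neg A))) (Fm.imp (Fm.neg (Fm.neg A)) (Fm.neg (Fm.imp Fm.bot (Fm.imp Fm.bot Fm.bot)))))) (Prov.L1 _ (Fm.neg (Fm.neg (Fm.neg A))) (Fm.neg (Fm.neg (Fm.imp Fm.bot (Fm.imp Fm.bot Fm.bot))))) (Prov.L2 _ (Fm.neg (Fm.neg (Fm.neg A))) (Fm.imp (Fm.neg (Fm.neg (Fm.imp Fm.bot (Fm.imp Fm.bot Fm.bot))))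 (Fm.neg (Fm.neg (Fm.neg A)))) (Fm.imp (Fm.neg (Fm.neg A)) (Fm.neg (Fm.imp Fm.bot (Fm.imp Fm.bot Fm.bot))))))) (Prov.L2 _ (Fm.neg (Fm.neg (Fm.neg A))) (Fm.imp (Fm.neg (Fm.neg A)) (Fm.neg (Fm.imp Fm.bot (Fm.imp Fm.bot Fm.bot)))) (Fm.imp (Fm.imp Fm.bot (Fm.imp Fm.bot Fm.bot)) (Fm.neg A))))) (Prov.L2 _ (Fm.neg (Fm.neg (Fm.neg A))) (Fm.imp (Fm.imp Fm.bot (Fm.imp Fm.bot Fm.bot)) (Fm.neg A)) (Fm.neg A)))) (Prov.L4 _ (Fm.neg (Fm.neg A)) A))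

theorem prov_dn2 (Γ : Set Fm) (A : Fm) : Prov Γ (Fm.imp (Fm.neg (Fm.neg A)) A) :=
  (Prov.mp _ (Fm.imp (Fm.imp (Fm.imp Fm.bot (Fm.imp Fm.bot Fm.bot)) A) A) (Fm.imp (Fm.neg (Fm.neg A)) A) (Prov.mp _ (Fm.imp (Fm.imp A (Fm.imp Fm.bot (Fm.imp Fm.bot Fm.bot))) (Fm.imp Fm.bot (Fm.imp Fm.bot Fm.bot))) (Fm.imp (Fm.imp (Fm.imp Fm.bot (Fm.imp Fm.bot Fm.bot)) A) A) (Prov.mp _ (Fm.imp Fm.bot (Fm.imp Fm.bot Fm.bot)) (Fm.imp (Fm.imp A (Fm.imp Fm.bot (Fm.imp Fm.bot Fm.bot))) (Fm.imp Fm.bot (Fm.imp Fm.bot Fm.bot))) (Prov.L1 _ Fm.bot Fm.bot) (Prov.L1 _ (Fm.imp Fm.bot (Fm.imp Fm.bot Fm.bot)) (Fm.imp A (Fm.imp Fm.bot (Fm.imp Fm.bot Fm.bot))))) (Prov.L3 _ A (Fm.imp Fm.bot (Fm.imp Fm.bot Fm.bot)))) (Prov.mp _ (Fm.imp (Fm.neg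 (Fm.neg A)) (Fm.imp (Fm.imp Fm.bot (Fm.imp Fm.bot Fm.bot)) A)) (Fm.imp (Fm.imp (Fm.imp (Fm.imp Fm.bot (Fm.imp Fm.bot Fm.bot)) A) A) (Fm.imp (Fm.neg (Fm.neg A)) A)) (Prov.mp _ (Fm.imp (Fm.imp (Fm.neg A) (Fm.neg (Fm.imp Fm.bot (Fm.imp Fm.bot Fm.bot)))) (Fm.imp (Fm.imp Fm.bot (Fm.imp Fm.bot Fm.bot)) A)) (Fm.imp (Fm.neg (Fm.neg A)) (Fm.imp (Fm.imp Fm.bot (Fm.imp Fm.bot Fm.bot)) A)) (Prov.L4 _ A (Fm.imp Fm.bot (Fm.imp Fm.bot Fm.bot))) (Prov.mp _ (Fm.imp (Fm.neg (Fm.neg A)) (Fm.imp (Fm.neg A) (Fm.neg (Fm.imp Fm.bot (Fm.imp Fm.bot Fm.bot))))) (Fm.imp (Fm.imp (Fm.imp (Fm.neg A) (Fm.neg (Fm.imp Fm.bot (Fm.imp Fm.bot Fm.bot)))) (Fm.imp (Fm.imp Fm.bot (Fm.imp Fm.bot Fm.bot)) A)) (Fm.imp (Fm.neg (Fm.neg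 A)) (Fm.imp (Fm.imp Fm.bot (Fm.imp Fm.bot Fm.bot)) A))) (Prov.mp _ (Fm.imp (Fm.imp (Fm.neg (Fm.neg (Fm.imp Fm.bot (Fm.imp Fm.bot Fm.bot)))) (Fm.neg (Fm.neg A))) (Fm.imp (Fm.neg A) (Fm.neg (Fm.imp Fm.bot (Fm.imp Fm.bot Fm.bot))))) (Fm.imp (Fm.neg (Fm.neg A)) (Fm.imp (Fm.neg A) (Fm.neg (Fm.imp Fm.bot (Fm.imp Fm.bot Fm.bot))))) (Prov.L4 _ (Fm.neg (Fm.imp Fm.bot (Fm.imp Fm.bot Fm.bot))) (Fm.neg A)) (Prov.mp _ (Fm.imp (Fm.neg (Fm.neg A)) (Fm.imp (Fm.neg (Fm.neg (Fm.imp Fm.bot (Fm.imp Fm.bot Fm.bot)))) (Fm.neg (Fm.neg A)))) (Fm.imp (Fm.imp (Fm.imp (Fm.neg (Fm.neg (Fm.imp Fm.bot (Fm.imp Fm.bot Fm.bot)))) (Fm.neg (Fm.neg A))) (Fm.imp (Fm.neg A) (Fm.neg (Fm.imp Fm.bot (Fm.imp Fm.bot Fm.bot))))) (Fm.imp (Fm.neg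 (Fm.neg A)) (Fm.imp (Fm.neg A) (Fm.neg (Fm.imp Fm.bot (Fm.imp Fm.bot Fm.bot)))))) (Prov.L1 _ (Fm.neg (Fm.neg A)) (Fm.neg (Fm.neg (Fm.imp Fm.bot (Fm.imp Fm.bot Fm.bot))))) (Prov.L2 _ (Fm.neg (Fm.neg A)) (Fm.imp (Fm.neg (Fm.neg (Fm.imp Fm.bot (Fm.imp Fm.bot Fm.bot)))) (Fm.neg (Fm.neg A))) (Fm.imp (Fm.neg A) (Fm.neg (Fm.imp Fm.bot (Fm.imp Fm.bot Fm.bot))))))) (Prov.L2 _ (Fm.neg (Fm.neg A)) (Fm.imp (Fm.neg A) (Fm.neg (Fm.imp Fm.bot (Fm.imp Fm.bot Fm.bot)))) (Fm.imp (Fm.imp Fm.bot (Fm.imp Fm.bot Fm.bot)) A)))) (Prov.L2 _ (Fm.neg (Fm.neg A)) (Fm.imp (Fm.imp Fm.bot (Fm.imp Fm.bot Fm.bot)) A) A)))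

-- derived rules and theorems
theorem prov_syl {Γ : Set Fm} {A B C : Fm} (h1 : Prov Γ (A.imp B))
    (h2 : Prov Γ (B.imp C)) : Prov Γ (A.imp C) :=
  Prov.mp _ _ _ h2 (Prov.mp _ _ _ h1 (Prov.L2 _ A B C))

theorem prov_w {Γ : Set Fm} {B : Fm} (A : Fm) (h : Prov Γ B) :
    Prov Γ (A.imp B) :=
  Prov.mp _ _ _ h (Prov.L1 _ B A)

theorem prov_perm (Γ : Set Fm) (A B C : Fm) :
    Prov Γ ((A.imp (B.imp C)).imp (B.imp (A.imp C))) := by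
  have s1 := Prov.L2 Γ A (B.imp C) C
  have s2 := Prov.mp _ _ _ (prov_assert Γ B C)
    (Prov.L2 Γ B ((B.imp C).imp C) (A.imp C))
  exact prov_syl s1 s2

theorem prov_pre (Γ : Set Fm) (A B C : Fm) :
    Prov Γ ((A.imp B).imp ((C.imp A).imp (C.imp B))) :=
  Prov.mp _ _ _ (Prov.L2 Γ C A B) (prov_perm Γ (C.imp A) (A.imp B) (C.imp B))

theorem prov_pre_rule {Γ : Set Fm} {A B : Fm} (C : Fm) (h : Prov Γ (A.imp B)) :
    Prov Γ ((C.imp A).imp (C.imp B)) :=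
  Prov.mp _ _ _ h (prov_pre Γ A B C)

theorem prov_suf_rule {Γ : Set Fm} {A B : Fm} (C : Fm) (h : Prov Γ (A.imp B)) :
    Prov Γ ((B.imp C).imp (A.imp C)) :=
  Prov.mp _ _ _ h (Prov.L2 Γ A B C)

theorem prov_con (Γ : Set Fm) (A B : Fm) :
    Prov Γ ((A.imp B).imp (B.neg.imp A.neg)) := by
  have s1 : Prov Γ ((A.imp B).imp (A.neg.neg.imp B)) :=
    prov_suf_rule B (prov_dn2 Γ A)
  have s2 : Prov Γ ((A.neg.neg.imp B).imp (A.neg.neg.imp B.neg.neg)) :=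
    prov_pre_rule A.neg.neg (prov_dn1 Γ B)
  exact prov_syl (prov_syl s1 s2) (Prov.L4 Γ A.neg B.neg)

theorem prov_con_rule {Γ : Set Fm} {A B : Fm} (h : Prov Γ (A.imp B)) :
    Prov Γ (B.neg.imp A.neg) :=
  Prov.mp _ _ _ h (prov_con Γ A B)

theorem prov_odot_intro_thm (Γ : Set Fm) (A B : Fm) :
    Prov Γ (A.imp (B.imp (A.odot B))) := by
  have t1 := prov_assert Γ A B.neg
  have t2 := prov_con Γ (A.imp B.neg) B.neg
  have t3 : Prov Γ (A.imp (B.neg.neg.imp (A.imp B.neg).neg)) := prov_syl t1 t2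
  have t4 : Prov Γ ((B.neg.neg.imp (A.imp B.neg).neg).imp
      (B.imp (A.imp B.neg).neg)) := prov_suf_rule _ (prov_dn1 Γ B)
  exact prov_syl t3 t4

theorem prov_odot_intro {Γ : Set Fm} {A B : Fm} (hA : Prov Γ A)
    (hB : Prov Γ B) : Prov Γ (A.odot B) :=
  Prov.mp _ _ _ hB (Prov.mp _ _ _ hA (prov_odot_intro_thm Γ A B))

theorem prov_odot_mp (Γ : Set Fm) (A B : Fm) :
    Prov Γ (((A.imp B).odot A).imp B) := by
  have u2 : Prov Γ (B.neg.imp ((A.imp B).imp A.neg)) :=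
    Prov.mp _ _ _ (prov_con Γ A B) (prov_perm Γ (A.imp B) B.neg A.neg)
  have u3 : Prov Γ (((A.imp B).imp A.neg).neg.imp B.neg.neg) := prov_con_rule u2
  exact prov_syl u3 (prov_dn2 Γ B)

theorem prov_odot_mono {Γ : Set Fm} {A B C D : Fm} (h1 : Prov Γ (A.imp B))
    (h2 : Prov Γ (C.imp D)) : Prov Γ ((A.odot C).imp (B.odot D)) := by
  have v1 : Prov Γ ((B.imp D.neg).imp (A.imp D.neg)) := prov_suf_rule _ h1
  have v2 : Prov Γ ((A.imp D.neg).imp (A.imp C.neg)) :=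
    prov_pre_rule A (prov_con_rule h2)
  exact prov_con_rule (prov_syl v1 v2)

theorem prov_res1 (Γ : Set Fm) (A B C : Fm) :
    Prov Γ ((A.imp (B.imp C)).imp ((A.odot B).imp C)) := by
  have w1 : Prov Γ ((A.imp (B.imp C)).imp (A.imp (C.neg.imp B.neg))) :=
    prov_pre_rule A (prov_con Γ B C)
  have w2 := prov_perm Γ A C.neg B.neg
  have w3 := prov_con Γ C.neg (A.imp B.neg)
  have w4 : Prov Γ (((A.imp B.neg).neg.imp C.neg.neg).imp
      ((A.imp B.neg).neg.imp C)) := prov_pre_rule _ (prov_dn2 Γ C)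
  exact prov_syl (prov_syl (prov_syl w1 w2) w3) w4

theorem prov_res1_rule {Γ : Set Fm} {A B C : Fm}
    (h : Prov Γ (A.imp (B.imp C))) : Prov Γ ((A.odot B).imp C) :=
  Prov.mp _ _ _ h (prov_res1 Γ A B C)

theorem prov_odot_assoc (Γ : Set Fm) (A B C : Fm) :
    Prov Γ ((A.odot (B.odot C)).imp ((A.odot B).odot C)) := by
  have i1 := prov_odot_intro_thm Γ (A.odot B) C
  have i2 := prov_odot_intro_thm Γ A B
  have p1 : Prov Γ (A.imp (B.imp (C.imp ((A.odot B).odot C)))) :=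
    prov_syl i2 (prov_pre_rule B i1)
  have p3 : Prov Γ (A.imp ((B.odot C).imp ((A.odot B).odot C))) :=
    Prov.mp _ _ _ p1 (prov_pre_rule A (prov_res1 Γ B C ((A.odot B).odot C)))
  exact prov_res1_rule p3

theorem prov_opow_split (Γ : Set Fm) (φ : Fm) (a b : ℕ) :
    Prov Γ ((opow φ (a + b + 1)).imp ((opow φ a).odot (opow φ b))) := by
  induction a with
  | zero =>
      have : 0 + b + 1 = b + 1 := by omega
      rw [this]
      exact prov_id Γ (opow φ (b + 1))
  | succ a ih =>
      have : a + 1 + b + 1 = (a + b + 1) + 1 := by omega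
      rw [this]
      have m1 : Prov Γ ((φ.odot (opow φ (a + b + 1))).imp
          (φ.odot ((opow φ a).odot (opow φ b)))) :=
        prov_odot_mono (prov_id Γ φ) ih
      exact prov_syl m1 (prov_odot_assoc Γ φ (opow φ a) (opow φ b))

theorem prov_mono {Γ Δ : Set Fm} {ψ : Fm} (h : Prov Γ ψ) (hs : Γ ⊆ Δ) :
    Prov Δ ψ := by
  induction h with
  | hyp φ hm => exact Prov.hyp _ _ (hs hm)
  | L1 φ ψ => exact Prov.L1 _ _ _
  | L2 φ ψ γ => exact Prov.L2 _ _ _ _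
  | L3 φ ψ => exact Prov.L3 _ _ _
  | L4 φ ψ => exact Prov.L4 _ _ _
  | mp φ ψ _ _ ih1 ih2 => exact Prov.mp _ _ _ ih1 ih2

theorem prov_opow_self {φ : Fm} (n : ℕ) : Prov {φ} (opow φ n) := by
  induction n with
  | zero => exact Prov.hyp _ _ rfl
  | succ n ih => exact prov_odot_intro (Prov.hyp _ _ rfl) ih


/-- Local deduction theorem for Łukasiewicz logic: φ ⊢ ψ iff ⊢ φⁿ → ψ for some
positive integer n (here `opow φ n` is the (n+1)-fold ⊙-power). -/
theorem local_deduction_theorem (φ ψ : Fm) :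
    Prov {φ} ψ ↔ ∃ n : ℕ, Prov ∅ ((opow φ n).imp ψ) := by
  constructor
  · intro h
    have key : ∀ χ, Prov {φ} χ → ∃ n : ℕ, Prov ∅ ((opow φ n).imp χ) := by
      intro χ h
      induction h with
      | hyp θ hm =>
          exact ⟨0, (Set.mem_singleton_iff.mp hm) ▸ prov_id ∅ φ⟩
      | L1 α β => exact ⟨0, prov_w _ (Prov.L1 _ _ _)⟩
      | L2 α β γ => exact ⟨0, prov_w _ (Prov.L2 _ _ _ _)⟩
      | L3 α β => exact ⟨0, prov_w _ (Prov.L3 _ _ _)⟩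
      | L4 α β => exact ⟨0, prov_w _ (Prov.L4 _ _ _)⟩
      | mp α β _ _ ih1 ih2 =>
          obtain ⟨m, hm⟩ := ih1
          obtain ⟨k, hk⟩ := ih2
          refine ⟨k + m + 1, ?_⟩
          have s1 := prov_opow_split ∅ φ k m
          have s2 : Prov ∅ (((opow φ k).odot (opow φ m)).imp
              ((α.imp β).odot α)) := prov_odot_mono hk hm
          exact prov_syl (prov_syl s1 s2) (prov_odot_mp ∅ α β)
    exact key ψ h
  · rintro ⟨n, h⟩
    have h' : Prov {φ} ((opow φ n).imp ψ) :=
      prov_mono h (Set.empty_subset _)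
    exact Prov.mp _ _ _ (prov_opow_self n) h'
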